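/- arXiv:2508.15618 — 4 statements merged into one kernel-verified Lean document; each statement's English description precedes it below -/
import Mathlib

section
/- Let (Ω, F, μ) be a probability space and let X : Ω → ℝ be a bounded measurable random variable that is not almost surely constant (i.e., there is no c ∈ ℝ with X = c μ-almost everywhere). Then the entropic risk measure is strictly increasing in its risk-aversion parameter: for all 0 < θ₁ < θ₂ one has (1/θ₁)·log(∫_Ω exp(θ₁·X) dμ) < (1/θ₂)·log(∫_Ω exp(θ₂·X) dμ). -/
/-!
With `p = θ₁ / θ₂ ∈ (0, 1)` we have `exp (θ₁ X) = exp (θ₂ X) ^ p`, so strict Jensen for the strictly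
concave map `y ↦ y ^ p` gives `E[exp (θ₁ X)] < E[exp (θ₂ X)] ^ p` unless `exp (θ₂ X)`, hence `X`, is
a.s. constant. Taking logarithms and dividing by `θ₁` yields `R_θ₁(X) < R_θ₂(X)`, where
`R_θ(X) = cgf X μ θ / θ`.
-/

open Real MeasureTheory ProbabilityTheory

theorem MeasureTheory.integral_rpow_lt_rpow_integral {α : Type*} [MeasurableSpace α]
    {μ : Measure α} [IsProbabilityMeasure μ] {f : α → ℝ} {p : ℝ} (hp₀ : 0 < p) (hp₁ : p < 1)
    (hf₀ : ∀ᵐ x ∂μ, 0 ≤ f x) (hf : Integrable f μ) (hfp : Integrable (fun x ↦ f x ^ p) μ)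
    (hnc : ¬ ∃ c, f =ᵐ[μ] fun _ ↦ c) :
    ∫ x, f x ^ p ∂μ < (∫ x, f x ∂μ) ^ p := by
  have hcont : ContinuousOn (fun y : ℝ ↦ y ^ p) (Set.Ici 0) :=
    fun y _ ↦ (continuousAt_rpow_const y p (Or.inr hp₀.le)).continuousWithinAt
  obtain hconst | hlt := (strictConcaveOn_rpow hp₀ hp₁).ae_eq_const_or_lt_map_average hcont
    isClosed_Ici hf₀ hf hfp
  · exact absurd ⟨_, hconst⟩ hnc
  · simpa only [average_eq_integral] using hlt

namespace ProbabilityTheory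

variable {Ω : Type*} [MeasurableSpace Ω] {μ : Measure Ω} [IsProbabilityMeasure μ] {X : Ω → ℝ}
  {t u : ℝ}

theorem mgf_lt_mgf_rpow (ht : 0 < t) (htu : t < u) (hu : Integrable (fun ω ↦ exp (u * X ω)) μ)
    (hnc : ¬ ∃ c, X =ᵐ[μ] fun _ ↦ c) :
    mgf X μ t < mgf X μ u ^ (t / u) := by
  have hu₀ : u ≠ 0 := (ht.trans htu).ne'
  have hpow : ∀ ω, exp (u * X ω) ^ (t / u) = exp (t * X ω) := fun ω ↦ by
    rw [← exp_mul, mul_comm u, mul_assoc, mul_div_cancel₀ _ hu₀, mul_comm]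
  have hexp_nc : ¬ ∃ c, (fun ω ↦ exp (u * X ω)) =ᵐ[μ] fun _ ↦ c := by
    rintro ⟨c, hc⟩
    refine hnc ⟨log c / u, hc.mono fun ω (hω : exp (u * X ω) = c) ↦ ?_⟩
    rw [← hω, log_exp, mul_div_cancel_left₀ _ hu₀]
  have ht_int := integrable_exp_mul_of_nonneg_of_le hu ht.le htu.le
  simpa only [mgf, hpow] using integral_rpow_lt_rpow_integral (div_pos ht (ht.trans htu))
    ((div_lt_one (ht.trans htu)).2 htu) (ae_of_all _ fun ω ↦ (exp_pos _).le) hu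
    (by simpa only [hpow] using ht_int) hexp_nc

theorem cgf_div_lt_cgf_div (ht : 0 < t) (htu : t < u)
    (hu : Integrable (fun ω ↦ exp (u * X ω)) μ) (hnc : ¬ ∃ c, X =ᵐ[μ] fun _ ↦ c) :
    cgf X μ t / t < cgf X μ u / u := by
  have hu₀ : 0 < u := ht.trans htu
  have hlog : cgf X μ t < t / u * cgf X μ u := by
    rw [cgf, cgf, ← log_rpow (mgf_pos hu)]
    exact log_lt_log (mgf_pos (integrable_exp_mul_of_nonneg_of_le hu ht.le htu.le))
      (mgf_lt_mgf_rpow ht htu hu hnc)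
  rw [div_lt_div_iff₀ ht hu₀]
  calc cgf X μ t * u < t / u * cgf X μ u * u := by gcongr
    _ = cgf X μ u * t := by field_simp

end ProbabilityTheory

/-- The entropic risk measure is strictly increasing in its risk-aversion parameter
whenever the random variable is not almost surely constant. -/
theorem entropic_risk_strictMono_in_theta
    {Ω : Type*} [MeasurableSpace Ω] (μ : Measure Ω) [IsProbabilityMeasure μ]
    (X : Ω → ℝ) (hX : Measurable X) (M : ℝ) (hM : ∀ ω, |X ω| ≤ M)
    (hnc : ¬ ∃ c : ℝ, X =ᵐ[μ] fun _ => c)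
    (θ₁ θ₂ : ℝ) (hθ₁ : 0 < θ₁) (hθ₁₂ : θ₁ < θ₂) :
    (1 / θ₁) * Real.log (∫ ω, Real.exp (θ₁ * X ω) ∂μ) <
      (1 / θ₂) * Real.log (∫ ω, Real.exp (θ₂ * X ω) ∂μ) := by
  have hθ₂ : Integrable (fun ω ↦ exp (θ₂ * X ω)) μ :=
    integrable_exp_mul_of_le θ₂ M (hθ₁.trans hθ₁₂).le hX.aemeasurable
      (ae_of_all _ fun ω ↦ (abs_le.1 (hM ω)).2)
  rw [one_div_mul_eq_div, one_div_mul_eq_div]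
  exact cgf_div_lt_cgf_div hθ₁ hθ₁₂ hθ₂ hnc
end

section
/- Let (Ω, F, μ) be a probability space, let θ > 0, and let X, δ : Ω → ℝ be bounded measurable random variables. Then the real function t ↦ (1/θ)·log(∫_Ω exp(θ·(X + t·δ)) dμ) is differentiable at t = 0 with derivative equal to ∫_Ω exp(θ·X)·δ dμ / ∫_Ω exp(θ·X) dμ. -/
open MeasureTheory Real

/-! Writing `θ (X + t δ) = θ X + t (θ δ)`, the integral is differentiated under the integral sign,
the boundedness of `δ` dominating the `t`-derivative by a multiple of the integrable `exp (θ X)`;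
the chain rule for `log` then divides by the (positive) partition function `∫ exp (θ X) dμ`. -/

theorem hasDerivAt_integral_exp_add_mul {Ω : Type*} [MeasurableSpace Ω] {μ : Measure Ω}
    {f g : Ω → ℝ} {M : ℝ} (hf : Integrable (fun ω => exp (f ω)) μ)
    (hg : AEStronglyMeasurable g μ) (hgM : ∀ᵐ ω ∂μ, |g ω| ≤ M) :
    HasDerivAt (fun t => ∫ ω, exp (f ω + t * g ω) ∂μ) (∫ ω, exp (f ω) * g ω ∂μ) 0 := by
  have hF_meas : ∀ t : ℝ, AEStronglyMeasurable (fun ω => exp (f ω + t * g ω)) μ := fun t =>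
    (hf.aestronglyMeasurable.mul (continuous_exp.comp_aestronglyMeasurable
      (hg.const_mul t))).congr (.of_forall fun ω => (exp_add _ _).symm)
  have hF'_bound : ∀ᵐ ω ∂μ, ∀ t ∈ Metric.ball (0 : ℝ) 1,
      ‖exp (f ω + t * g ω) * g ω‖ ≤ M * exp M * exp (f ω) := by
    filter_upwards [hgM] with ω hω t ht
    have ht' : |t| < 1 := by simpa using ht
    have htg : t * g ω ≤ M := calc
      t * g ω ≤ |t| * |g ω| := (le_abs_self _).trans (abs_mul t (g ω)).le
      _ ≤ 1 * |g ω| := by gcongr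
      _ ≤ M := by linarith
    rw [norm_mul, norm_of_nonneg (exp_pos _).le, norm_eq_abs, exp_add]
    calc exp (f ω) * exp (t * g ω) * |g ω| ≤ exp (f ω) * exp M * M := by gcongr
      _ = M * exp M * exp (f ω) := by ring
  have hF'_deriv : ∀ ω t, HasDerivAt (fun t => exp (f ω + t * g ω)) (exp (f ω + t * g ω) * g ω) t :=
    fun ω t => by simpa using (((hasDerivAt_id t).mul_const (g ω)).const_add (f ω)).exp
  obtain ⟨-, h⟩ := hasDerivAt_integral_of_dominated_loc_of_deriv_le
    (Metric.ball_mem_nhds 0 one_pos) (.of_forall hF_meas) (by simpa using hf)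
    ((hF_meas 0).mul hg) hF'_bound (hf.const_mul _) (.of_forall fun ω t _ => hF'_deriv ω t)
  simpa using h

/-- The entropic risk measure is differentiable along bounded measurable directions,
with derivative given by an exponentially tilted expectation. -/
theorem entropic_risk_hasDerivAt
    {Ω : Type*} [MeasurableSpace Ω] (μ : Measure Ω) [IsProbabilityMeasure μ]
    (θ : ℝ) (hθ : 0 < θ)
    (X δ : Ω → ℝ) (hX : Measurable X) (hδ : Measurable δ)
    (MX : ℝ) (hMX : ∀ ω, |X ω| ≤ MX) (Mδ : ℝ) (hMδ : ∀ ω, |δ ω| ≤ Mδ) :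
    HasDerivAt
      (fun t : ℝ => (1 / θ) * Real.log (∫ ω, Real.exp (θ * (X ω + t * δ ω)) ∂μ))
      ((∫ ω, Real.exp (θ * X ω) * δ ω ∂μ) / (∫ ω, Real.exp (θ * X ω) ∂μ)) 0 := by
  have hZ_int : Integrable (fun ω => exp (θ * X ω)) μ := by
    refine .of_bound (hX.const_mul θ).exp.aestronglyMeasurable (exp (θ * MX)) (.of_forall fun ω => ?_)
    rw [norm_of_nonneg (exp_pos _).le, exp_le_exp]
    exact mul_le_mul_of_nonneg_left (le_of_abs_le (hMX ω)) hθ.le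
  have hδ_bound : ∀ᵐ ω ∂μ, |θ * δ ω| ≤ θ * Mδ := .of_forall fun ω => by
    rw [abs_mul, abs_of_pos hθ]
    exact mul_le_mul_of_nonneg_left (hMδ ω) hθ.le
  have hderiv := hasDerivAt_integral_exp_add_mul hZ_int (hδ.const_mul θ).aestronglyMeasurable hδ_bound
  have hlog := (hderiv.log (by simpa using (integral_exp_pos hZ_int).ne')).const_mul (1 / θ)
  simp_rw [mul_add θ, mul_left_comm θ]
  refine hlog.congr_deriv ?_
  simp only [zero_mul, add_zero]
  simp only [mul_left_comm _ θ, integral_const_mul]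
  field_simp
end

section
/- Let H be a real separable Hilbert space, let C : H → H be a continuous linear map, let (Ω, F, μ) be a probability space, let θ > 0, let g ∈ H, and let y, δ : Ω → H be bounded strongly measurable functions. Then the real function φ(t) := (1/θ)·log(∫_Ω exp(θ·‖C(y(σ) + t·δ(σ) − g)‖_H²) dμ(σ)) is differentiable at t = 0 with derivative φ'(0) = 2·∫_Ω exp(θ·‖C(y(σ) − g)‖_H²)·⟨C*C(y(σ) − g), δ(σ)⟩_H dμ(σ) / ∫_Ω exp(θ·‖C(y(σ) − g)‖_H²) dμ(σ), where C* denotes the Hilbert-space adjoint of C. -/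
/-!
Write `X t σ = ‖C (y σ + t • δ σ - g)‖ ^ 2`. Both `X` and its `t`-derivative
`2 ⟪C (y σ + t • δ σ - g), C (δ σ)⟫` are bounded uniformly for `|t| < 1`, so
`exp (θ X t)` may be differentiated under the integral sign (dominated convergence), and the
chain rule through `log` gives `d/dt R_θ(X t) = E[exp (θ X) X'] / E[exp (θ X)]`.
The inner product is moved onto `δ σ` by the adjoint.
-/

open MeasureTheory Real
open scoped RealInnerProductSpace

noncomputable def entropicRisk {Ω : Type*} [MeasurableSpace Ω] (μ : Measure Ω) (θ : ℝ)
    (X : Ω → ℝ) : ℝ :=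
  (1 / θ) * log (∫ σ, exp (θ * X σ) ∂μ)

section EntropicRisk

variable {Ω : Type*} [MeasurableSpace Ω] {μ : Measure Ω}

theorem mul_le_abs_mul_of_abs_le {θ x K : ℝ} (hx : |x| ≤ K) : θ * x ≤ |θ| * K :=
  (le_abs_self _).trans <| by rw [abs_mul]; gcongr

theorem integrable_exp_mul_of_abs_le [IsFiniteMeasure μ] {X : Ω → ℝ}
    (hX : AEStronglyMeasurable X μ) {K : ℝ} (hK : ∀ σ, |X σ| ≤ K) (θ : ℝ) :
    Integrable (fun σ => exp (θ * X σ)) μ :=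
  Integrable.of_bound (continuous_exp.comp_aestronglyMeasurable (hX.const_mul θ))
    (exp (|θ| * K)) <| .of_forall fun σ => by
      rw [norm_of_nonneg (exp_pos _).le]
      exact exp_le_exp.2 (mul_le_abs_mul_of_abs_le (hK σ))

theorem abs_exp_mul_mul_le {θ x x' K K' : ℝ} (hx : |x| ≤ K) (hx' : |x'| ≤ K') :
    |exp (θ * x) * (θ * x')| ≤ exp (|θ| * K) * (|θ| * K') := by
  rw [abs_mul, abs_mul, abs_of_pos (exp_pos _)]
  have := mul_le_abs_mul_of_abs_le (θ := θ) hx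
  gcongr

theorem hasDerivAt_entropicRisk [IsFiniteMeasure μ] [NeZero μ] {θ : ℝ} (hθ : θ ≠ 0)
    {X X' : ℝ → Ω → ℝ} {t₀ : ℝ} {s : Set ℝ} (hs : s ∈ nhds t₀) {K K' : ℝ}
    (hX_meas : ∀ t ∈ s, AEStronglyMeasurable (X t) μ)
    (hX'_meas : AEStronglyMeasurable (X' t₀) μ)
    (hX_bound : ∀ t ∈ s, ∀ σ, |X t σ| ≤ K) (hX'_bound : ∀ t ∈ s, ∀ σ, |X' t σ| ≤ K')
    (hX_deriv : ∀ t ∈ s, ∀ σ, HasDerivAt (X · σ) (X' t σ) t) :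
    HasDerivAt (fun t => entropicRisk μ θ (X t))
      ((∫ σ, exp (θ * X t₀ σ) * X' t₀ σ ∂μ) / ∫ σ, exp (θ * X t₀ σ) ∂μ) t₀ := by
  have ht₀ : t₀ ∈ s := mem_of_mem_nhds hs
  have hexp_int := integrable_exp_mul_of_abs_le (hX_meas t₀ ht₀) (hX_bound t₀ ht₀) θ
  obtain ⟨-, hderiv_integral⟩ := hasDerivAt_integral_of_dominated_loc_of_deriv_le
    (F := fun t σ => exp (θ * X t σ)) (F' := fun t σ => exp (θ * X t σ) * (θ * X' t σ))
    (bound := fun _ => exp (|θ| * K) * (|θ| * K')) hs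
    (Filter.eventually_of_mem hs fun t ht =>
      continuous_exp.comp_aestronglyMeasurable ((hX_meas t ht).const_mul θ))
    hexp_int
    ((continuous_exp.comp_aestronglyMeasurable ((hX_meas t₀ ht₀).const_mul θ)).mul
      (hX'_meas.const_mul θ))
    (.of_forall fun σ t ht => abs_exp_mul_mul_le (hX_bound t ht σ) (hX'_bound t ht σ))
    (integrable_const _)
    (.of_forall fun σ t ht => ((hX_deriv t ht σ).const_mul θ).exp)
  have hZ_pos : 0 < ∫ σ, exp (θ * X t₀ σ) ∂μ := integral_exp_pos hexp_int
  refine ((hderiv_integral.log hZ_pos.ne').const_mul (1 / θ)).congr_deriv ?_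
  simp only [mul_left_comm _ θ, integral_const_mul]
  field_simp

end EntropicRisk

section TrackingCost

variable {E F : Type*} [NormedAddCommGroup E] [NormedSpace ℝ E]
  [NormedAddCommGroup F] [InnerProductSpace ℝ F]

theorem norm_apply_add_smul_sub_le (C : E →L[ℝ] F) {a b c : E} {t A B : ℝ}
    (ha : ‖a‖ ≤ A) (hb : ‖b‖ ≤ B) (ht : |t| ≤ 1) :
    ‖C (a + t • b - c)‖ ≤ ‖C‖ * (A + B + ‖c‖) := by
  have htb : ‖t • b‖ ≤ B := by
    rw [norm_smul, norm_eq_abs]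
    nlinarith [norm_nonneg b, abs_nonneg t]
  refine C.le_opNorm_of_le ?_
  calc ‖a + t • b - c‖ ≤ ‖a‖ + ‖t • b‖ + ‖c‖ := norm_sub_le_of_le (norm_add_le _ _) le_rfl
    _ ≤ A + B + ‖c‖ := by gcongr

theorem hasDerivAt_norm_sq_apply_add_smul_sub (C : E →L[ℝ] F) (a b c : E) (t : ℝ) :
    HasDerivAt (fun s : ℝ => ‖C (a + s • b - c)‖ ^ 2)
      (2 * ⟪C (a + t • b - c), C b⟫) t := by
  have hline : HasDerivAt (fun s : ℝ => a + s • b - c) b t := by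
    simpa using (((hasDerivAt_id t).smul_const b).const_add a).sub_const c
  exact (C.hasFDerivAt.comp_hasDerivAt t hline).norm_sq

end TrackingCost

theorem entropic_risk_tracking_hasDerivAt_general
    {H : Type*} [NormedAddCommGroup H] [InnerProductSpace ℝ H]
    [CompleteSpace H]
    (C : H →L[ℝ] H)
    {Ω : Type*} [MeasurableSpace Ω] (μ : Measure Ω) [IsProbabilityMeasure μ]
    (θ : ℝ) (hθ : 0 < θ) (g : H) (y δ : Ω → H)
    (hy : StronglyMeasurable y) (hδ : StronglyMeasurable δ)
    (My : ℝ) (hMy : ∀ σ, ‖y σ‖ ≤ My) (Mδ : ℝ) (hMδ : ∀ σ, ‖δ σ‖ ≤ Mδ) :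
    HasDerivAt
      (fun t : ℝ =>
        (1 / θ) * Real.log (∫ σ, Real.exp (θ * ‖C (y σ + t • δ σ - g)‖ ^ 2) ∂μ))
      (2 * (∫ σ, Real.exp (θ * ‖C (y σ - g)‖ ^ 2) *
              ⟪(ContinuousLinearMap.adjoint C) (C (y σ - g)), δ σ⟫ ∂μ) /
        (∫ σ, Real.exp (θ * ‖C (y σ - g)‖ ^ 2) ∂μ)) 0 := by
  set R := ‖C‖ * (My + Mδ + ‖g‖)
  have hR : ∀ t ∈ Metric.ball (0 : ℝ) 1, ∀ σ, ‖C (y σ + t • δ σ - g)‖ ≤ R := fun t ht σ =>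
    norm_apply_add_smul_sub_le C (hMy σ) (hMδ σ) (by simpa using (mem_ball_zero_iff.1 ht).le)
  have hX_bound : ∀ t ∈ Metric.ball (0 : ℝ) 1, ∀ σ, |‖C (y σ + t • δ σ - g)‖ ^ 2| ≤ R ^ 2 :=
    fun t ht σ => by
      rw [abs_of_nonneg (by positivity)]
      exact pow_le_pow_left₀ (norm_nonneg _) (hR t ht σ) 2
  have hX'_bound : ∀ t ∈ Metric.ball (0 : ℝ) 1, ∀ σ,
      |2 * ⟪C (y σ + t • δ σ - g), C (δ σ)⟫| ≤ 2 * (R * (‖C‖ * Mδ)) := fun t ht σ => by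
    rw [abs_mul, abs_two]
    gcongr
    exact (abs_real_inner_le_norm _ _).trans <| mul_le_mul (hR t ht σ)
      (C.le_opNorm_of_le (hMδ σ)) (norm_nonneg _) ((norm_nonneg _).trans (hR t ht σ))
  refine (hasDerivAt_entropicRisk hθ.ne' (Metric.ball_mem_nhds 0 one_pos)
    (X := fun t σ => ‖C (y σ + t • δ σ - g)‖ ^ 2)
    (X' := fun t σ => 2 * ⟪C (y σ + t • δ σ - g), C (δ σ)⟫)
    (fun t _ => by fun_prop) (by fun_prop) hX_bound hX'_bound
    (fun t _ σ => hasDerivAt_norm_sq_apply_add_smul_sub C (y σ) (δ σ) g t)).congr_deriv ?_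
  simp only [zero_smul, add_zero, ContinuousLinearMap.adjoint_inner_left, mul_left_comm _ (2 : ℝ),
    integral_const_mul, mul_div_assoc]

/-- First derivative of the entropic risk of a quadratic tracking cost,
in a bounded strongly measurable direction `δ`. -/
theorem entropic_risk_tracking_hasDerivAt
    {H : Type*} [NormedAddCommGroup H] [InnerProductSpace ℝ H]
    [CompleteSpace H] [SecondCountableTopology H]
    (C : H →L[ℝ] H)
    {Ω : Type*} [MeasurableSpace Ω] (μ : Measure Ω) [IsProbabilityMeasure μ]
    (θ : ℝ) (hθ : 0 < θ) (g : H) (y δ : Ω → H)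
    (hy : StronglyMeasurable y) (hδ : StronglyMeasurable δ)
    (My : ℝ) (hMy : ∀ σ, ‖y σ‖ ≤ My) (Mδ : ℝ) (hMδ : ∀ σ, ‖δ σ‖ ≤ Mδ) :
    HasDerivAt
      (fun t : ℝ =>
        (1 / θ) * Real.log (∫ σ, Real.exp (θ * ‖C (y σ + t • δ σ - g)‖ ^ 2) ∂μ))
      (2 * (∫ σ, Real.exp (θ * ‖C (y σ - g)‖ ^ 2) *
              ⟪(ContinuousLinearMap.adjoint C) (C (y σ - g)), δ σ⟫ ∂μ) /
        (∫ σ, Real.exp (θ * ‖C (y σ - g)‖ ^ 2) ∂μ)) 0 :=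
  entropic_risk_tracking_hasDerivAt_general C μ θ hθ g y δ hy hδ My hMy Mδ hMδ
end

section
/- Let H be a real separable Hilbert space, let C : H → H be a continuous linear map for which there exists c > 0 with ‖Cx‖_H ≥ c·‖x‖_H for all x ∈ H, let (Ω, F, μ) be a probability space, let θ > 0, let g ∈ H, and let y, δ : Ω → H be bounded strongly measurable functions. Suppose a ≤ ‖C(y(σ) − g)‖_H² ≤ b for μ-almost every σ. Define ω(σ) := exp(θ·‖C(y(σ) − g)‖_H²) / ∫_Ω exp(θ·‖C(y(τ) − g)‖_H²) dμ(τ) and 𝒞(σ) := C*C(y(σ) − g). Then the quadratic form is coercive: 2·∫_Ω ω(σ)·‖C δ(σ)‖_H² dμ(σ) + 4θ·( ∫_Ω ω(σ)·⟨𝒞(σ), δ(σ)⟩_H² dμ(σ) − ( ∫_Ω ω(σ)·⟨𝒞(σ), δ(σ)⟩_H dμ(σ) )² ) ≥ 2·c²·exp(−θ·(b − a))·∫_Ω ‖δ(σ)‖_H² dμ(σ). -/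
/-!
The weight `ω` is the density of the exponentially tilted probability measure
`ν = μ.tilted (θ ‖C (y - g)‖²)`, so every weighted integral is an integral against `ν`, and the
bracket multiplying `4θ` is the variance of `⟪C* C (y - g), δ⟫` under `ν`, hence nonnegative.
Since `θa ≤ θ ‖C (y - g)‖² ≤ θb` almost everywhere, the normalising constant is at most `exp (θb)`
and so `ω ≥ exp (-θ (b - a))` almost everywhere; combined with `‖C δ‖² ≥ c² ‖δ‖²` this bounds the
first term from below.
-/

open MeasureTheory Real
open scoped RealInnerProductSpace

section Tilted

variable {Ω : Type*} [MeasurableSpace Ω] {μ : Measure Ω} {f : Ω → ℝ} {a b : ℝ}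

lemma integrable_exp_of_ae_le [IsFiniteMeasure μ] (hf : AEStronglyMeasurable f μ)
    (hb : ∀ᵐ x ∂μ, f x ≤ b) : Integrable (fun x ↦ exp (f x)) μ :=
  .of_bound (continuous_exp.comp_aestronglyMeasurable hf) (exp b) <| by
    filter_upwards [hb] with x hx
    rw [norm_of_nonneg (exp_pos _).le]
    exact exp_le_exp.2 hx

variable [IsProbabilityMeasure μ]

lemma integral_exp_le_of_ae_le (hf : AEStronglyMeasurable f μ) (hb : ∀ᵐ x ∂μ, f x ≤ b) :
    ∫ x, exp (f x) ∂μ ≤ exp b := by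
  simpa using integral_mono_ae (integrable_exp_of_ae_le hf hb) (integrable_const (exp b))
    (hb.mono fun x hx ↦ exp_le_exp.2 hx)

lemma exp_sub_le_tilted_density (hf : AEStronglyMeasurable f μ)
    (hab : ∀ᵐ x ∂μ, f x ∈ Set.Icc a b) :
    ∀ᵐ x ∂μ, exp (a - b) ≤ exp (f x) / ∫ y, exp (f y) ∂μ := by
  have hb : ∀ᵐ x ∂μ, f x ≤ b := hab.mono fun x hx ↦ hx.2
  have hZ0 : 0 < ∫ y, exp (f y) ∂μ := integral_exp_pos (integrable_exp_of_ae_le hf hb)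
  filter_upwards [hab] with x hx
  rw [exp_sub]
  exact div_le_div₀ (exp_pos _).le (exp_le_exp.2 hx.1) hZ0 (integral_exp_le_of_ae_le hf hb)

lemma exp_sub_mul_integral_le_integral_tilted {g : Ω → ℝ} (hf : AEStronglyMeasurable f μ)
    (hab : ∀ᵐ x ∂μ, f x ∈ Set.Icc a b) (hg0 : 0 ≤ᵐ[μ] g) (hg : Integrable g (μ.tilted f)) :
    exp (a - b) * ∫ x, g x ∂μ ≤ ∫ x, g x ∂μ.tilted f := by
  have hexp := integrable_exp_of_ae_le hf (hab.mono fun x hx ↦ hx.2)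
  rw [integral_tilted, ← integral_const_mul]
  refine integral_mono_of_nonneg ?_ ?_ ?_
  · filter_upwards [hg0] with x hx using mul_nonneg (exp_pos _).le hx
  · simpa only [smul_eq_mul, div_mul_eq_mul_div] using
      ((integrable_tilted_iff hexp g).1 hg).div_const (∫ x, exp (f x) ∂μ)
  · filter_upwards [hg0, exp_sub_le_tilted_density hf hab] with x hx hω
    exact mul_le_mul_of_nonneg_right hω hx

end Tilted

lemma sq_integral_le_integral_sq {Ω : Type*} [MeasurableSpace Ω] {μ : Measure Ω}
    [IsProbabilityMeasure μ] {X : Ω → ℝ} (hX : MemLp X 2 μ) :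
    (∫ x, X x ∂μ) ^ 2 ≤ ∫ x, X x ^ 2 ∂μ := by
  have := ProbabilityTheory.variance_nonneg X μ
  rw [ProbabilityTheory.variance_eq_sub hX] at this
  simpa using this

section BoundedFields

variable {Ω E F : Type*} [MeasurableSpace Ω] {μ : Measure Ω} [IsFiniteMeasure μ]
  [NormedAddCommGroup E] [NormedAddCommGroup F] {δ : Ω → E} {M : ℝ}

lemma integrable_norm_apply_sq [NormedSpace ℝ E] [NormedSpace ℝ F] (L : E →L[ℝ] F)
    (hδ : StronglyMeasurable δ) (hM : ∀ σ, ‖δ σ‖ ≤ M) :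
    Integrable (fun σ ↦ ‖L (δ σ)‖ ^ 2) μ :=
  .of_bound ((by fun_prop : Continuous fun x ↦ ‖L x‖ ^ 2).comp_stronglyMeasurable
    hδ).aestronglyMeasurable ((‖L‖ * M) ^ 2) <| ae_of_all _ fun σ ↦ by
      simpa using pow_le_pow_left₀ (norm_nonneg _) (L.le_opNorm_of_le (hM σ)) 2

lemma sq_mul_integral_norm_sq_le_integral_norm_apply_sq [NormedSpace ℝ E] [NormedSpace ℝ F]
    (L : E →L[ℝ] F) {c : ℝ} (hc : 0 ≤ c) (hL : ∀ x, c * ‖x‖ ≤ ‖L x‖)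
    (hδ : StronglyMeasurable δ) (hM : ∀ σ, ‖δ σ‖ ≤ M) :
    c ^ 2 * ∫ σ, ‖δ σ‖ ^ 2 ∂μ ≤ ∫ σ, ‖L (δ σ)‖ ^ 2 ∂μ := by
  rw [← integral_const_mul]
  refine integral_mono (.const_mul ?_ _) (integrable_norm_apply_sq L hδ hM) fun σ ↦ ?_
  · simpa using integrable_norm_apply_sq (μ := μ) (.id ℝ E) hδ hM
  · simpa [mul_pow] using pow_le_pow_left₀ (by positivity) (hL (δ σ)) 2

lemma memLp_inner_adjoint_apply [InnerProductSpace ℝ E] [InnerProductSpace ℝ F]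
    [CompleteSpace E] [CompleteSpace F] (L : E →L[ℝ] F) {u : Ω → E} {b : ℝ}
    (hu : StronglyMeasurable u) (hδ : StronglyMeasurable δ)
    (hub : ∀ᵐ σ ∂μ, ‖L (u σ)‖ ^ 2 ≤ b) (hM : ∀ σ, ‖δ σ‖ ≤ M) (p : ENNReal) :
    MemLp (fun σ ↦ ⟪(ContinuousLinearMap.adjoint L) (L (u σ)), δ σ⟫) p μ := by
  refine .of_bound ((by fun_prop : Continuous fun x : E × E ↦
    ⟪(ContinuousLinearMap.adjoint L) (L x.1), x.2⟫).comp_stronglyMeasurable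
      (hu.prodMk hδ)).aestronglyMeasurable (√b * (‖L‖ * M)) (hub.mono fun σ hσ ↦ ?_)
  rw [Real.norm_eq_abs, ContinuousLinearMap.adjoint_inner_left]
  calc |⟪L (u σ), L (δ σ)⟫| ≤ ‖L (u σ)‖ * ‖L (δ σ)‖ := abs_real_inner_le_norm _ _
    _ ≤ √b * (‖L‖ * M) := by
      gcongr
      · exact Real.le_sqrt_of_sq_le hσ
      · exact L.le_opNorm_of_le (hM σ)

end BoundedFields

theorem entropic_risk_second_order_coercive_general
    {H : Type*} [NormedAddCommGroup H] [InnerProductSpace ℝ H]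
    [CompleteSpace H]
    (C : H →L[ℝ] H) (c : ℝ) (hc : 0 < c) (hC : ∀ x : H, c * ‖x‖ ≤ ‖C x‖)
    {Ω : Type*} [MeasurableSpace Ω] (μ : Measure Ω) [IsProbabilityMeasure μ]
    (θ : ℝ) (hθ : 0 < θ) (g : H) (y δ : Ω → H)
    (hy : StronglyMeasurable y) (hδ : StronglyMeasurable δ)
    (Mδ : ℝ) (hMδ : ∀ σ, ‖δ σ‖ ≤ Mδ)
    (a b : ℝ)
    (hab : ∀ᵐ σ ∂μ, a ≤ ‖C (y σ - g)‖ ^ 2 ∧ ‖C (y σ - g)‖ ^ 2 ≤ b) :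
    2 * c ^ 2 * Real.exp (-θ * (b - a)) * (∫ σ, ‖δ σ‖ ^ 2 ∂μ) ≤
      2 * (∫ σ, (Real.exp (θ * ‖C (y σ - g)‖ ^ 2) /
            ∫ τ, Real.exp (θ * ‖C (y τ - g)‖ ^ 2) ∂μ) * ‖C (δ σ)‖ ^ 2 ∂μ)
        + 4 * θ *
          ((∫ σ, (Real.exp (θ * ‖C (y σ - g)‖ ^ 2) /
                ∫ τ, Real.exp (θ * ‖C (y τ - g)‖ ^ 2) ∂μ) *
                ⟪(ContinuousLinearMap.adjoint C) (C (y σ - g)), δ σ⟫ ^ 2 ∂μ)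
            - (∫ σ, (Real.exp (θ * ‖C (y σ - g)‖ ^ 2) /
                ∫ τ, Real.exp (θ * ‖C (y τ - g)‖ ^ 2) ∂μ) *
                ⟪(ContinuousLinearMap.adjoint C) (C (y σ - g)), δ σ⟫ ∂μ) ^ 2) := by
  set φ : Ω → ℝ := fun σ ↦ θ * ‖C (y σ - g)‖ ^ 2
  have hφ : AEStronglyMeasurable φ μ :=
    ((by fun_prop : Continuous fun x : H ↦ θ * ‖C (x - g)‖ ^ 2).comp_stronglyMeasurable
      hy).aestronglyMeasurable
  have hφab : ∀ᵐ σ ∂μ, φ σ ∈ Set.Icc (θ * a) (θ * b) := hab.mono fun σ hσ ↦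
    ⟨mul_le_mul_of_nonneg_left hσ.1 hθ.le, mul_le_mul_of_nonneg_left hσ.2 hθ.le⟩
  set ν := μ.tilted φ
  have : IsProbabilityMeasure ν :=
    isProbabilityMeasure_tilted (integrable_exp_of_ae_le hφ (hφab.mono fun _ h ↦ h.2))
  have hlow : exp (θ * a - θ * b) * ∫ σ, ‖δ σ‖ ^ 2 ∂μ ≤ ∫ σ, ‖δ σ‖ ^ 2 ∂ν :=
    exp_sub_mul_integral_le_integral_tilted hφ hφab (ae_of_all _ fun _ ↦ sq_nonneg _)
      (by simpa using integrable_norm_apply_sq (.id ℝ H) hδ hMδ)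
  have hcoer := sq_mul_integral_norm_sq_le_integral_norm_apply_sq (μ := ν) C hc.le hC hδ hMδ
  have hvar := sq_integral_le_integral_sq <| memLp_inner_adjoint_apply C
    (hy.sub stronglyMeasurable_const) hδ
    ((tilted_absolutelyContinuous μ φ).ae_le (hab.mono fun _ h ↦ h.2)) hMδ 2
  suffices 2 * c ^ 2 * exp (-θ * (b - a)) * (∫ σ, ‖δ σ‖ ^ 2 ∂μ) ≤
      2 * (∫ σ, ‖C (δ σ)‖ ^ 2 ∂ν) + 4 * θ *
        ((∫ σ, ⟪(ContinuousLinearMap.adjoint C) (C (y σ - g)), δ σ⟫ ^ 2 ∂ν)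
          - (∫ σ, ⟪(ContinuousLinearMap.adjoint C) (C (y σ - g)), δ σ⟫ ∂ν) ^ 2) by
    simpa only [ν, integral_tilted, smul_eq_mul] using this
  calc 2 * c ^ 2 * exp (-θ * (b - a)) * (∫ σ, ‖δ σ‖ ^ 2 ∂μ)
      = 2 * c ^ 2 * (exp (θ * a - θ * b) * ∫ σ, ‖δ σ‖ ^ 2 ∂μ) := by ring_nf
    _ ≤ 2 * c ^ 2 * ∫ σ, ‖δ σ‖ ^ 2 ∂ν := by gcongr
    _ ≤ 2 * ∫ σ, ‖C (δ σ)‖ ^ 2 ∂ν := by rw [mul_assoc]; gcongr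
    _ ≤ _ := le_add_of_nonneg_right (by have := sub_nonneg.2 hvar; positivity)

/-- Coercivity of the second-order quadratic form of the entropic risk objective
when the observation operator `C` is bounded below. -/
theorem entropic_risk_second_order_coercive
    {H : Type*} [NormedAddCommGroup H] [InnerProductSpace ℝ H]
    [CompleteSpace H] [SecondCountableTopology H]
    (C : H →L[ℝ] H) (c : ℝ) (hc : 0 < c) (hC : ∀ x : H, c * ‖x‖ ≤ ‖C x‖)
    {Ω : Type*} [MeasurableSpace Ω] (μ : Measure Ω) [IsProbabilityMeasure μ]
    (θ : ℝ) (hθ : 0 < θ) (g : H) (y δ : Ω → H)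
    (hy : StronglyMeasurable y) (hδ : StronglyMeasurable δ)
    (My : ℝ) (hMy : ∀ σ, ‖y σ‖ ≤ My) (Mδ : ℝ) (hMδ : ∀ σ, ‖δ σ‖ ≤ Mδ)
    (a b : ℝ)
    (hab : ∀ᵐ σ ∂μ, a ≤ ‖C (y σ - g)‖ ^ 2 ∧ ‖C (y σ - g)‖ ^ 2 ≤ b) :
    2 * c ^ 2 * Real.exp (-θ * (b - a)) * (∫ σ, ‖δ σ‖ ^ 2 ∂μ) ≤
      2 * (∫ σ, (Real.exp (θ * ‖C (y σ - g)‖ ^ 2) /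
            ∫ τ, Real.exp (θ * ‖C (y τ - g)‖ ^ 2) ∂μ) * ‖C (δ σ)‖ ^ 2 ∂μ)
        + 4 * θ *
          ((∫ σ, (Real.exp (θ * ‖C (y σ - g)‖ ^ 2) /
                ∫ τ, Real.exp (θ * ‖C (y τ - g)‖ ^ 2) ∂μ) *
                ⟪(ContinuousLinearMap.adjoint C) (C (y σ - g)), δ σ⟫ ^ 2 ∂μ)
            - (∫ σ, (Real.exp (θ * ‖C (y σ - g)‖ ^ 2) /
                ∫ τ, Real.exp (θ * ‖C (y τ - g)‖ ^ 2) ∂μ) *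
                ⟪(ContinuousLinearMap.adjoint C) (C (y σ - g)), δ σ⟫ ∂μ) ^ 2) :=
  entropic_risk_second_order_coercive_general C c hc hC μ θ hθ g y δ hy hδ Mδ hMδ a b hab
end
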